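/- arXiv:2604.06976 — 5 statements merged into one kernel-verified Lean document; each statement's English description precedes it below -/
import Mathlib

section
/- Additive drift theorem: Let (X_t)_{t∈ℕ} be an integrable stochastic process over ℝ and let T = inf{t ∈ ℕ : X_t = 0}. Assume: (NN) for all t, on the event {t ≤ T}, X_t ≥ 0 almost surely; and (D) there is δ > 0 such that for all t, on the event {t < T}, E[X_t − X_{t+1} | X_0, …, X_t] ≥ δ almost surely. Then E[T] ≤ E[X_0]/δ. -/
/-!
Let `S t = {t ≤ T}` be the event that the process has not hit `0` before time `t`, so that
`E[T] = ∑ₜ P(t < T) = ∑ₜ P(S (t+1))`. The potential `Y t = E[X t; S t]` is nonnegative by (NN)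
and, since `X t` vanishes on `S t \ S (t+1)` and `S (t+1)` is determined by `X 0, …, X t`, the
drift condition gives `Y t - Y (t+1) ≥ δ P(S (t+1))`. Telescoping yields
`δ ∑_{t<n} P(S (t+1)) ≤ Y 0 = E[X 0]` for every `n`.
-/

open MeasureTheory ENNReal

section HittingTime

variable {p : ℕ → Prop}

theorem natCast_le_iInf_natCast_iff {t : ℕ} :
    (t : ℝ≥0∞) ≤ ⨅ (s : ℕ) (_ : p s), (s : ℝ≥0∞) ↔ ∀ s < t, ¬ p s := by
  simp only [le_iInf_iff, Nat.cast_le]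
  exact forall_congr' fun _ => by rw [← not_lt]; exact imp_not_comm

theorem iInf_natCast_eq_encard :
    ⨅ (s : ℕ) (_ : p s), (s : ℝ≥0∞) = ({t : ℕ | ∀ s ≤ t, ¬ p s}.encard : ℝ≥0∞) := by
  classical
  by_cases h : ∃ s, p s
  · have hset : {t : ℕ | ∀ s ≤ t, ¬ p s} = Finset.range (Nat.find h) := by
      ext t; simp
    have hinf : ⨅ (s : ℕ) (_ : p s), (s : ℝ≥0∞) = Nat.find h :=
      le_antisymm (iInf₂_le _ (Nat.find_spec h))
        (le_iInf₂ fun s hs => Nat.cast_le.mpr (Nat.find_min' h hs))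
    rw [hinf, hset, Set.encard_coe_eq_coe_finsetCard, Finset.card_range]
    rfl
  · push Not at h
    simp [h]

end HittingTime

theorem lintegral_encard_eq_tsum_measure {Ω ι : Type*} [MeasurableSpace Ω] {μ : Measure Ω}
    [Countable ι] {A : ι → Set Ω} (hA : ∀ i, MeasurableSet (A i)) :
    ∫⁻ ω, ({i | ω ∈ A i}.encard : ℝ≥0∞) ∂μ = ∑' i, μ (A i) := by
  have hsum : ∀ ω, ({i | ω ∈ A i}.encard : ℝ≥0∞) = ∑' i, (A i).indicator 1 ω := by
    intro ω
    rw [← ENNReal.tsum_set_one, tsum_subtype _ fun _ => (1 : ℝ≥0∞)]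
    rfl
  simp_rw [hsum]
  rw [lintegral_tsum fun i => (measurable_one.indicator (hA i)).aemeasurable]
  simp_rw [lintegral_indicator_one (hA _)]

theorem mul_measureReal_le_setIntegral_of_le_condExp {Ω : Type*} {m m₀ : MeasurableSpace Ω}
    {μ : Measure Ω} [IsFiniteMeasure μ] (hm : m ≤ m₀) [SigmaFinite (μ.trim hm)] {f : Ω → ℝ}
    (hf : Integrable f μ) {s : Set Ω} (hs : MeasurableSet[m] s) {c : ℝ}
    (hc : ∀ᵐ ω ∂μ, ω ∈ s → c ≤ μ[f | m] ω) :
    c * μ.real s ≤ ∫ ω in s, f ω ∂μ := by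
  rw [← setIntegral_condExp hm hf hs, mul_comm, ← smul_eq_mul, ← setIntegral_const]
  exact setIntegral_mono_ae_restrict (integrable_const c).integrableOn
    integrable_condExp.integrableOn ((ae_restrict_iff' (hm s hs)).mpr hc)

theorem tsum_le_ofReal_of_sum_range_toReal_le {a : ℕ → ℝ≥0∞} (ha : ∀ t, a t ≠ ∞) {c : ℝ}
    (h : ∀ n, ∑ t ∈ Finset.range n, (a t).toReal ≤ c) : ∑' t, a t ≤ ENNReal.ofReal c := by
  refine ENNReal.tsum_le_of_sum_range_le fun n => ?_
  rw [← ENNReal.ofReal_toReal (ENNReal.sum_ne_top.mpr fun t _ => ha t),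
    ENNReal.toReal_sum fun t _ => ha t]
  exact ENNReal.ofReal_le_ofReal (h n)

namespace AdditiveDrift

variable {Ω : Type*} (X : ℕ → Ω → ℝ)

/-- The event `{t ≤ T}`, `T` the first hitting time of `0`. -/
def survivalSet (t : ℕ) : Set Ω := {ω | ∀ s < t, X s ω ≠ 0}

abbrev history (t : ℕ) : MeasurableSpace Ω :=
  MeasurableSpace.comap (fun ω (i : Fin (t + 1)) => X i ω) inferInstance

variable {X}

theorem survivalSet_zero : survivalSet X 0 = Set.univ := by
  simp [survivalSet]

theorem survivalSet_succ_subset (t : ℕ) : survivalSet X (t + 1) ⊆ survivalSet X t :=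
  fun _ hω s hs => hω s (hs.trans t.lt_succ_self)

theorem measurableSet_survivalSet {m : MeasurableSpace Ω} {t : ℕ}
    (hX : ∀ s < t, Measurable[m] (X s)) : MeasurableSet[m] (survivalSet X t) := by
  simp only [survivalSet, Set.ofPred_forall]
  exact .iInter fun s => .iInter fun hs => (hX s hs) (measurableSet_singleton 0).compl

theorem measurable_history {s t : ℕ} (hst : s ≤ t) : Measurable[history X t] (X s) :=
  (measurable_pi_apply (⟨s, Nat.lt_succ_of_le hst⟩ : Fin (t + 1))).comp
    (comap_measurable (fun ω (i : Fin (t + 1)) => X i ω))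

variable [MeasurableSpace Ω]

theorem history_le (hX : ∀ t, Measurable (X t)) (t : ℕ) : history X t ≤ ‹MeasurableSpace Ω› :=
  (measurable_pi_lambda (fun ω (i : Fin (t + 1)) => X i ω) fun i => hX i).comap_le

variable {μ : Measure Ω}

theorem setIntegral_survivalSet_eq_succ (hX : ∀ t, Measurable (X t)) (t : ℕ) :
    ∫ ω in survivalSet X t, X t ω ∂μ = ∫ ω in survivalSet X (t + 1), X t ω ∂μ := by
  refine setIntegral_eq_of_subset_of_forall_sdiff_eq_zero
    (measurableSet_survivalSet fun s _ => hX s) (survivalSet_succ_subset t) fun ω ⟨hω, hω'⟩ => ?_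
  by_contra hne
  exact hω' fun s hs => (Nat.lt_succ_iff_lt_or_eq.mp hs).elim (hω s) fun h => h ▸ hne

theorem mul_measureReal_add_setIntegral_succ_le [IsFiniteMeasure μ] (hX : ∀ t, Measurable (X t))
    (hint : ∀ t, Integrable (X t) μ) {δ : ℝ} {t : ℕ}
    (hdrift : ∀ᵐ ω ∂μ, ω ∈ survivalSet X (t + 1) → δ ≤ μ[X t - X (t + 1) | history X t] ω) :
    δ * μ.real (survivalSet X (t + 1)) + ∫ ω in survivalSet X (t + 1), X (t + 1) ω ∂μ ≤
      ∫ ω in survivalSet X t, X t ω ∂μ := by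
  have hcond := mul_measureReal_le_setIntegral_of_le_condExp (history_le hX t)
    ((hint t).sub (hint (t + 1)))
    (measurableSet_survivalSet fun _ hs => measurable_history (Nat.lt_succ_iff.mp hs)) hdrift
  rw [Pi.sub_def, integral_sub (hint t).integrableOn (hint (t + 1)).integrableOn] at hcond
  rw [setIntegral_survivalSet_eq_succ hX t]
  linarith

theorem mul_sum_measureReal_survivalSet_le [IsFiniteMeasure μ] (hX : ∀ t, Measurable (X t))
    (hint : ∀ t, Integrable (X t) μ) (hnonneg : ∀ t, ∀ᵐ ω ∂μ, ω ∈ survivalSet X t → 0 ≤ X t ω)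
    {δ : ℝ} (hdrift : ∀ t, ∀ᵐ ω ∂μ, ω ∈ survivalSet X (t + 1) →
      δ ≤ μ[X t - X (t + 1) | history X t] ω) (n : ℕ) :
    δ * ∑ t ∈ Finset.range n, μ.real (survivalSet X (t + 1)) ≤ ∫ ω, X 0 ω ∂μ := by
  set Y : ℕ → ℝ := fun t => ∫ ω in survivalSet X t, X t ω ∂μ
  have hY_nonneg : 0 ≤ Y n := setIntegral_nonneg_of_ae_restrict
    ((ae_restrict_iff' (measurableSet_survivalSet fun s _ => hX s)).mpr (hnonneg n))
  have hY_zero : Y 0 = ∫ ω, X 0 ω ∂μ := by simp [Y, survivalSet_zero]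
  calc δ * ∑ t ∈ Finset.range n, μ.real (survivalSet X (t + 1))
      ≤ ∑ t ∈ Finset.range n, (Y t - Y (t + 1)) := by
        rw [Finset.mul_sum]
        exact Finset.sum_le_sum fun t _ => by
          linarith [mul_measureReal_add_setIntegral_succ_le hX hint (hdrift t)]
    _ = Y 0 - Y n := Finset.sum_range_sub' Y n
    _ ≤ ∫ ω, X 0 ω ∂μ := by linarith

end AdditiveDrift

open AdditiveDrift

/-- **Additive drift theorem.**
`(X t)` is an integrable real-valued process,
`T ω = inf {t : ℕ | X t ω = 0}` (with value `⊤ = ∞` if `0` is never hit).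
Assume (NN): on the event `{t ≤ T}`, `X t ≥ 0` a.s., and (D): there is `δ > 0` such that
on the event `{t < T}`, `E[X t − X (t+1) | X 0, …, X t] ≥ δ` a.s.
Then `E[T] ≤ E[X 0] / δ`. -/
theorem additive_drift
    {Ω : Type*} [MeasurableSpace Ω] (μ : Measure Ω) [IsProbabilityMeasure μ]
    (X : ℕ → Ω → ℝ)
    (hmeas : ∀ t, Measurable (X t))
    (hint : ∀ t, Integrable (X t) μ)
    (T : Ω → ℝ≥0∞)
    (hT : ∀ ω, T ω = ⨅ (t : ℕ) (_ : X t ω = 0), (t : ℝ≥0∞))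
    (hNN : ∀ t : ℕ, ∀ᵐ ω ∂μ, (t : ℝ≥0∞) ≤ T ω → 0 ≤ X t ω)
    (δ : ℝ) (hδ : 0 < δ)
    (hdrift : ∀ t : ℕ, ∀ᵐ ω ∂μ, (t : ℝ≥0∞) < T ω →
      δ ≤
        (μ[(X t - X (t + 1)) |
          MeasurableSpace.comap (fun ω (i : Fin (t + 1)) => X i ω) inferInstance]) ω) :
    ∫⁻ ω, T ω ∂μ ≤ ENNReal.ofReal ((∫ ω, X 0 ω ∂μ) / δ) := by
  have hle_T : ∀ (t : ℕ) ω, (t : ℝ≥0∞) ≤ T ω ↔ ω ∈ survivalSet X t := fun t ω => by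
    rw [hT]; exact natCast_le_iInf_natCast_iff
  have hT_encard : ∀ ω, T ω = ({t | ω ∈ survivalSet X (t + 1)}.encard : ℝ≥0∞) := fun ω => by
    simp only [hT, iInf_natCast_eq_encard, survivalSet, Nat.lt_succ_iff, Set.mem_ofPred_eq]
  have hsum := mul_sum_measureReal_survivalSet_le hmeas hint
    (fun t => (hNN t).mono fun ω h hω => h ((hle_T t ω).mpr hω))
    (fun t => (hdrift t).mono fun ω h hω =>
      h ((Nat.cast_lt.mpr t.lt_succ_self).trans_le ((hle_T (t + 1) ω).mpr hω)))
  calc ∫⁻ ω, T ω ∂μ = ∫⁻ ω, ({t | ω ∈ survivalSet X (t + 1)}.encard : ℝ≥0∞) ∂μ :=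
        lintegral_congr hT_encard
    _ = ∑' t, μ (survivalSet X (t + 1)) :=
        lintegral_encard_eq_tsum_measure fun t => measurableSet_survivalSet fun s _ => hmeas s
    _ ≤ ENNReal.ofReal ((∫ ω, X 0 ω ∂μ) / δ) :=
        tsum_le_ofReal_of_sum_range_toReal_le (fun _ => measure_ne_top _ _)
          fun n => (le_div_iff₀' hδ).mpr (hsum n)
end

section
/- Let n ∈ ℕ, let 0 < χ < 1/2, let k ∈ ℕ with 1 ≤ k ≤ n and k ≤ 1/χ, and for i ∈ {1,…,k} set w_i = 1 + (k+1−i)/k and g(x) = Σ_{i=1}^k w_i·(1 − x_i) for x ∈ {0,1}^n. Then for every current point x ∈ {0,1}^n with g(x) > 0, one step of the (1+1) EA with mutation rate χ on BinVal satisfies E[g(x) − g(x')] ≥ χ·g(x)/(4e), where x' is the next point and the expectation is over the random mutation. -/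
/-!
Partition the offspring `y ≠ x` by the first position `j` at which `y` differs from `x`.
BinVal compares bit strings lexicographically, so `y` is accepted exactly when `x j = 0`. The
class of `j` has probability `χ (1 - χ)^j`, and within it the later bits still flip
independently. Hence the drift of a potential `∑_{i ∈ S} w_i (1 - x_i)` is an explicit sum over
the zero bits `j` of `x`: the gain `w_j`, against an expected loss of at most `χ ∑_{i > j} w_i`.
For the weights `w_i = 1 + (k + 1 - i)/k` and `χ ≤ 1/k` the loss is at most `3/4 · w_j`, and
`(1 - χ)^(k - 1) ≥ 1/e`.
-/

open scoped BigOperators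

noncomputable section

/-- `BinVal` on bit strings of length `n`: index `0` (bit number `1`) is the most
significant bit, with weight `2 ^ (n - 1 - i)`. -/
def binVal (n : ℕ) (x : Fin n → Bool) : ℕ :=
  ∑ i : Fin n, if x i then 2 ^ (n - 1 - (i : ℕ)) else 0

/-- Probability that standard bit mutation with rate `χ` turns `x` into `y`:
each bit flips independently with probability `χ`. -/
def flipProb (n : ℕ) (χ : ℝ) (x y : Fin n → Bool) : ℝ :=
  ∏ i : Fin n, if x i = y i then 1 - χ else χ

/-- Elitist selection of the (1+1) EA on BinVal: the offspring `y` replaces `x`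
iff `BinVal y ≥ BinVal x`. -/
def select (n : ℕ) (x y : Fin n → Bool) : Fin n → Bool :=
  if binVal n x ≤ binVal n y then y else x

open Finset Real

variable {n : ℕ}

lemma binVal_eq_sum_image (z : Fin n → Bool) :
    binVal n z =
      ∑ e ∈ ({i | z i} : Finset (Fin n)).image (fun i : Fin n => n - 1 - (i : ℕ)), 2 ^ e := by
  rw [binVal, ← sum_filter, sum_image]
  intro a _ b _ h
  have := a.isLt
  have := b.isLt
  ext
  simp only at h
  omega

lemma binVal_lt_binVal {x y : Fin n → Bool} {j : Fin n} (hagree : ∀ i < j, x i = y i)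
    (hx : x j = false) (hy : y j = true) : binVal n x < binVal n y := by
  rw [binVal_eq_sum_image, binVal_eq_sum_image, geomSum_lt_geomSum_iff_toColex_lt_toColex le_rfl,
    Colex.toColex_lt_toColex_iff_exists_forall_lt]
  refine ⟨n - 1 - j, mem_image_of_mem _ (by simpa using hy), ?_, ?_⟩
  · simp only [mem_image, mem_filter, mem_univ, true_and, not_exists, not_and]
    intro i hxi hij
    have : i = j := by
      have := i.isLt
      have := j.isLt
      ext
      omega
    simp_all
  · simp only [mem_image, mem_filter, mem_univ, true_and, not_exists, not_and,
      forall_exists_index, and_imp]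
    rintro _ i hxi rfl hyi
    have hji : j < i := by
      rcases lt_trichotomy i j with h | rfl | h
      · exact absurd rfl (hyi i (hagree i h ▸ hxi))
      · simp_all
      · exact h
    have := i.isLt
    have : (j : ℕ) < i := hji
    omega

section FirstDiffClass

variable (x : Fin n → Bool) (j : Fin n)

def firstDiffSlice (m : Fin n) : Finset Bool :=
  if m < j then {x m} else if m = j then {!x m} else univ

def firstDiffClass : Finset (Fin n → Bool) :=
  Fintype.piFinset (firstDiffSlice x j)

variable {x j}

lemma mem_firstDiffClass {y : Fin n → Bool} :
    y ∈ firstDiffClass x j ↔ (∀ m < j, y m = x m) ∧ y j = !x j := by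
  simp only [firstDiffClass, firstDiffSlice, Fintype.mem_piFinset]
  constructor
  · intro h
    exact ⟨fun m hm => by simpa [hm] using h m, by simpa using h j⟩
  · rintro ⟨hlt, hj⟩ m
    rcases lt_trichotomy m j with h | rfl | h
    · simp [h, hlt m h]
    · simp [hj]
    · simp [h.not_gt, h.ne']

lemma select_of_mem_firstDiffClass {y : Fin n → Bool} (hy : y ∈ firstDiffClass x j) :
    select n x y = if x j then x else y := by
  obtain ⟨hagree, hyj⟩ := mem_firstDiffClass.1 hy
  cases hxj : x j <;> rw [hxj] at hyj
  · simp [select, (binVal_lt_binVal (fun i hi => (hagree i hi).symm) hxj hyj).le]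
  · simp [select, binVal_lt_binVal hagree hyj hxj]

variable (x) in
lemma sum_eq_add_sum_firstDiffClass {M : Type*} [AddCommMonoid M] (F : (Fin n → Bool) → M) :
    ∑ y, F y = F x + ∑ j, ∑ y ∈ firstDiffClass x j, F y := by
  have hdisj_of_lt {j j' : Fin n} (h : j < j') :
      Disjoint (firstDiffClass x j) (firstDiffClass x j') := by
    refine disjoint_left.2 fun y hy hy' => ?_
    have h1 := (mem_firstDiffClass.1 hy).2
    rw [(mem_firstDiffClass.1 hy').1 j h] at h1
    simp at h1
  have hdisj : ((univ : Finset (Fin n)) : Set (Fin n)).PairwiseDisjoint (firstDiffClass x) :=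
    fun j _ j' _ hne => hne.lt_or_gt.elim hdisj_of_lt fun h => (hdisj_of_lt h).symm
  have hx : x ∉ univ.biUnion (firstDiffClass x) := by
    simp [mem_firstDiffClass]
  have hcover : univ = insert x (univ.biUnion (firstDiffClass x)) := by
    refine (eq_univ_of_forall fun y => ?_).symm
    rw [mem_insert, mem_biUnion]
    by_cases hyx : y = x
    · exact .inl hyx
    obtain ⟨i, hi⟩ := Function.ne_iff.1 hyx
    let D : Finset (Fin n) := {i | y i ≠ x i}
    have hD : D.Nonempty := ⟨i, by simp [D, hi]⟩
    refine .inr ⟨D.min' hD, mem_univ _, mem_firstDiffClass.2 ⟨fun m hm => ?_, ?_⟩⟩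
    · by_contra h
      exact (D.min'_le m (by simp [D, h])).not_gt hm
    · have := D.min'_mem hD
      simp only [D, mem_filter, mem_univ, true_and] at this
      revert this
      cases y (D.min' hD) <;> cases x (D.min' hD) <;> simp
  rw [hcover, sum_insert hx, sum_biUnion hdisj]

end FirstDiffClass

lemma sum_piFinset_prod_mul_apply {ι β R : Type*} [Fintype ι] [DecidableEq ι] [CommSemiring R]
    (t : ι → Finset β) (q : ι → β → R) (u : β → R) (i : ι) :
    ∑ y ∈ Fintype.piFinset t, (∏ m, q m (y m)) * u (y i) =
      (∏ m ∈ univ.erase i, ∑ b ∈ t m, q m b) * ∑ b ∈ t i, q i b * u b := by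
  have hmark (y : ι → β) :
      (∏ m, q m (y m)) * u (y i) = ∏ m, q m (y m) * if m = i then u (y m) else 1 := by
    rw [prod_mul_distrib, prod_ite_eq' univ i]
    simp
  simp_rw [hmark]
  rw [← prod_univ_sum t (fun m b => q m b * if m = i then u b else 1),
    ← mul_prod_erase univ _ (mem_univ i), mul_comm]
  simp only [if_true]
  congr 1
  refine prod_congr rfl fun m hm => ?_
  simp [ne_of_mem_erase hm]

section FlipProb

variable (χ : ℝ) (x : Fin n → Bool) (j : Fin n)

lemma sum_flip_firstDiffSlice (m : Fin n) :
    ∑ b ∈ firstDiffSlice x j m, (if x m = b then 1 - χ else χ) =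
      if m < j then 1 - χ else if m = j then χ else 1 := by
  unfold firstDiffSlice
  split_ifs <;> cases x m <;> simp

lemma sum_flipProb_firstDiffClass :
    ∑ y ∈ firstDiffClass x j, flipProb n χ x y = (1 - χ) ^ (j : ℕ) * χ := by
  unfold flipProb firstDiffClass
  rw [← prod_univ_sum (firstDiffSlice x j) (fun m b => if x m = b then 1 - χ else χ)]
  simp only [sum_flip_firstDiffSlice]
  rw [prod_ite, prod_const, prod_ite_eq']
  simp [filter_gt_eq_Iio]

lemma sum_flipProb_mul_firstDiffClass (i : Fin n) {u : Bool → ℝ} (hu : u (x i) = 0) :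
    ∑ y ∈ firstDiffClass x j, flipProb n χ x y * u (y i) =
      (1 - χ) ^ (j : ℕ) * χ *
        (if i = j then u (!x i) else if j < i then χ * u (!x i) else 0) := by
  rcases lt_trichotomy i j with hij | rfl | hji
  · have hzero : ∀ y ∈ firstDiffClass x j, flipProb n χ x y * u (y i) = 0 := fun y hy => by
      rw [(mem_firstDiffClass.1 hy).1 i hij, hu, mul_zero]
    simp [sum_eq_zero hzero, hij.ne, hij.not_gt]
  · rw [sum_congr rfl fun y hy => by rw [(mem_firstDiffClass.1 hy).2], ← sum_mul,
      sum_flipProb_firstDiffClass, if_pos rfl]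
  · have hslice : ∑ b ∈ firstDiffSlice x j i, (if x i = b then 1 - χ else χ) = 1 := by
      rw [sum_flip_firstDiffSlice, if_neg hji.not_gt, if_neg hji.ne']
    unfold flipProb
    rw [firstDiffClass, sum_piFinset_prod_mul_apply _ (fun m b => if x m = b then 1 - χ else χ),
      prod_erase (f := fun m => ∑ b ∈ firstDiffSlice x j m, if x m = b then 1 - χ else χ)
        _ hslice,
      prod_univ_sum]
    change (∑ y ∈ firstDiffClass x j, flipProb n χ x y) * _ = _
    rw [sum_flipProb_firstDiffClass]
    cases hxi : x i <;>
      simp [firstDiffSlice, hji.not_gt, hji.ne', hji, hxi ▸ hu]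

end FlipProb

def drift (χ : ℝ) (G : (Fin n → Bool) → ℝ) (x : Fin n → Bool) : ℝ :=
  ∑ y, flipProb n χ x y * (G x - G (select n x y))

def potential (S : Finset (Fin n)) (w : Fin n → ℝ) (z : Fin n → Bool) : ℝ :=
  ∑ i ∈ S, w i * if z i then 0 else 1

section Potential

variable (χ : ℝ) (S : Finset (Fin n)) (w : Fin n → ℝ) (x : Fin n → Bool)

lemma potential_eq_sum_filter :
    potential S w x = ∑ j with x j = false, if j ∈ S then w j else 0 := by
  rw [potential, sum_filter, ← sum_subset (subset_univ S) fun j _ hj => by simp [hj]]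
  refine sum_congr rfl fun j hj => ?_
  cases x j <;> simp [hj]

lemma sum_firstDiffClass_potential_sub_select (j : Fin n) :
    ∑ y ∈ firstDiffClass x j,
        flipProb n χ x y * (potential S w x - potential S w (select n x y)) =
      if x j then 0 else (1 - χ) ^ (j : ℕ) * χ *
        ((if j ∈ S then w j else 0) +
          χ * ∑ i ∈ S with j < i, w i * if x i then -1 else 1) := by
  cases hxj : x j
  case true =>
    refine sum_eq_zero fun y hy => ?_
    rw [select_of_mem_firstDiffClass hy, hxj, if_pos rfl, sub_self, mul_zero]
  case false =>
    let δ (i : Fin n) (b : Bool) : ℝ := (if x i then 0 else 1) - if b then 0 else 1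
    have hδ (i : Fin n) : δ i (!x i) = if x i then -1 else 1 := by
      simp only [δ]
      cases x i <;> simp
    have hsplit (y : Fin n → Bool) : flipProb n χ x y * (potential S w x - potential S w y) =
        ∑ i ∈ S, w i * (flipProb n χ x y * δ i (y i)) := by
      rw [potential, potential, ← sum_sub_distrib, mul_sum]
      exact sum_congr rfl fun i _ => by ring
    have hsel (y) (hy : y ∈ firstDiffClass x j) : select n x y = y := by
      rw [select_of_mem_firstDiffClass hy, hxj, if_neg Bool.false_ne_true]
    rw [sum_congr rfl fun y hy => by rw [hsel y hy, hsplit], sum_comm]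
    simp_rw [← mul_sum]
    rw [sum_congr rfl fun i _ => by
      rw [sum_flipProb_mul_firstDiffClass χ x j i (u := δ i) (by simp [δ])]]
    rw [if_neg Bool.false_ne_true, sum_filter, ← sum_ite_eq' S j w, mul_sum, ← sum_add_distrib,
      mul_sum]
    refine sum_congr rfl fun i _ => ?_
    rcases lt_trichotomy i j with h | rfl | h
    · simp [h.ne, h.not_gt]
    · simp [δ, hxj]
      ring
    · rw [if_neg h.ne', if_pos h, if_neg h.ne', if_pos h, hδ]
      ring

lemma drift_potential :
    drift χ (potential S w) x =
      ∑ j with x j = false, (1 - χ) ^ (j : ℕ) * χ *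
        ((if j ∈ S then w j else 0) +
          χ * ∑ i ∈ S with j < i, w i * if x i then -1 else 1) := by
  have hself : select n x x = x := by simp [select]
  rw [drift, sum_eq_add_sum_firstDiffClass x, hself, sub_self, mul_zero, zero_add, sum_filter]
  refine sum_congr rfl fun j _ => ?_
  rw [sum_firstDiffClass_potential_sub_select]
  cases x j <;> simp

end Potential

/-- The paper's weight `w_{i+1}`: bits are indexed from `0` here. -/
def prefixWeight (k i : ℕ) : ℝ :=
  1 + ((k : ℝ) + 1 - ((i : ℝ) + 1)) / k

def prefixSet (k : ℕ) : Finset (Fin n) :=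
  univ.filter fun i => (i : ℕ) < k

@[simp]
lemma mem_prefixSet {k : ℕ} {i : Fin n} : i ∈ prefixSet k ↔ (i : ℕ) < k := by
  simp [prefixSet]

def prefixPotential (k : ℕ) : (Fin n → Bool) → ℝ :=
  potential (prefixSet k) fun i => prefixWeight k i

lemma prefixWeight_nonneg {k i : ℕ} (h : i ≤ k) : 0 ≤ prefixWeight k i := by
  have : (0 : ℝ) ≤ (k : ℝ) + 1 - ((i : ℝ) + 1) := by
    have : (i : ℝ) ≤ k := by exact_mod_cast h
    linarith
  unfold prefixWeight
  positivity

lemma sum_range_sub_mul_two (a : ℝ) (m : ℕ) :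
    (∑ l ∈ range m, (a - l)) * 2 = m * (2 * a - m + 1) := by
  induction m with
  | zero => simp
  | succ m ih =>
    rw [sum_range_succ, add_mul, ih]
    push_cast
    ring

lemma sum_Ico_prefixWeight {j k : ℕ} (hjk : j < k) :
    (∑ i ∈ Ico (j + 1) k, prefixWeight k i) * (2 * k) = ((k : ℝ) - 1 - j) * (3 * k - j) := by
  obtain ⟨m, rfl⟩ := Nat.exists_eq_add_of_lt hjk
  have hk : (0 : ℝ) < (j + m + 1 : ℕ) := by positivity
  have hw (l : ℕ) : prefixWeight (j + m + 1) (j + 1 + l) =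
      ((2 * (j + m + 1 : ℕ) - j - 1 : ℝ) - l) / (j + m + 1 : ℕ) := by
    unfold prefixWeight
    field_simp
    push_cast
    ring
  rw [sum_Ico_eq_sum_range, show j + m + 1 - (j + 1) = m by omega]
  simp_rw [hw, ← sum_div]
  rw [div_mul_eq_mul_div, div_eq_iff hk.ne']
  push_cast
  linear_combination ((j : ℝ) + m + 1) * sum_range_sub_mul_two (2 * ((j : ℝ) + m + 1) - j - 1) m

lemma mul_sum_Ico_prefixWeight_le {χ : ℝ} {j k : ℕ} (hχk : χ * k ≤ 1) (hjk : j < k) :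
    χ * ∑ i ∈ Ico (j + 1) k, prefixWeight k i ≤ 3 / 4 * prefixWeight k j := by
  have hK : (0 : ℝ) < k := by exact_mod_cast j.zero_le.trans_lt hjk
  have hJK : (j : ℝ) + 1 ≤ k := by exact_mod_cast hjk
  have hsum := sum_Ico_prefixWeight hjk
  set s := ∑ i ∈ Ico (j + 1) k, prefixWeight k i
  have hs : 0 ≤ s := sum_nonneg fun i hi => prefixWeight_nonneg (mem_Ico.1 hi).2.le
  have hw : prefixWeight k j * k = 2 * k - j := by
    unfold prefixWeight
    field_simp
    ring
  have hχs : χ * s * k ≤ s := by nlinarith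
  have hs_le : s * (2 * k) ≤ 3 / 4 * (2 * k - j) * (2 * k) := by
    rw [hsum]
    nlinarith [mul_nonneg j.cast_nonneg (by linarith : (0 : ℝ) ≤ k - 1 - j)]
  have := le_of_mul_le_mul_right hs_le (by positivity)
  rw [← mul_le_mul_iff_of_pos_right hK, mul_assoc (3 / 4 : ℝ), hw]
  linarith

lemma sum_filter_prefixWeight_le (k : ℕ) (j : Fin n) :
    ∑ i ∈ prefixSet k with j < i, prefixWeight k i ≤
      ∑ i ∈ Ico ((j : ℕ) + 1) k, prefixWeight k i := by
  rw [show ∑ i ∈ prefixSet k with j < i, prefixWeight k i =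
      ∑ i ∈ ((prefixSet k).filter (j < ·)).map Fin.valEmbedding, prefixWeight k i
    from (sum_map _ Fin.valEmbedding (prefixWeight k)).symm]
  refine sum_le_sum_of_subset_of_nonneg (fun l hl => ?_)
    fun i hi _ => prefixWeight_nonneg (mem_Ico.1 hi).2.le
  simp only [mem_map, mem_filter, mem_prefixSet, Fin.valEmbedding_apply] at hl
  obtain ⟨i, ⟨hik, hji⟩, rfl⟩ := hl
  exact mem_Ico.2 ⟨hji, hik⟩

lemma exp_neg_one_le_one_sub_pow {χ : ℝ} {m : ℕ} (h : χ * (m + 1) ≤ 1) :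
    exp (-1) ≤ (1 - χ) ^ m := by
  rcases Nat.eq_zero_or_pos m with rfl | hm
  · simp
  have hbase : (1 + (m : ℝ)⁻¹)⁻¹ ≤ 1 - χ := by
    have : χ ≤ 1 / (m + 1) := by rwa [le_div_iff₀ (by positivity)]
    calc (1 + (m : ℝ)⁻¹)⁻¹ = 1 - 1 / (m + 1) := by field_simp; ring
      _ ≤ 1 - χ := by linarith
  calc exp (-1) = (exp 1)⁻¹ := exp_neg 1
    _ ≤ ((1 + (m : ℝ)⁻¹) ^ m)⁻¹ := inv_anti₀ (by positivity) one_add_inv_pow_le_exp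
    _ = ((1 + (m : ℝ)⁻¹)⁻¹) ^ m := (inv_pow _ _).symm
    _ ≤ (1 - χ) ^ m := pow_le_pow_left₀ (by positivity) hbase m

theorem le_drift_prefixPotential {χ : ℝ} {k : ℕ} (hχ : 0 ≤ χ) (hχk : χ * k ≤ 1)
    (x : Fin n → Bool) :
    χ * (1 - χ) ^ (k - 1) / 4 * prefixPotential k x ≤ drift χ (prefixPotential k) x := by
  set S : Finset (Fin n) := prefixSet k
  rw [prefixPotential, drift_potential, potential_eq_sum_filter, mul_sum]
  refine sum_le_sum fun j _ => ?_
  by_cases hjk : (j : ℕ) < k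
  · have hχ1 : χ ≤ 1 := by
      have : (1 : ℝ) ≤ k := by exact_mod_cast Nat.one_le_of_lt hjk
      nlinarith
    have htail : χ * ∑ i ∈ S with j < i, prefixWeight k i ≤ 3 / 4 * prefixWeight k j :=
      (mul_le_mul_of_nonneg_left (sum_filter_prefixWeight_le k j) hχ).trans
        (mul_sum_Ico_prefixWeight_le hχk hjk)
    set T := ∑ i ∈ S with j < i, prefixWeight k i * if x i then -1 else 1
    have hsign : -∑ i ∈ S with j < i, prefixWeight k i ≤ T := by
      rw [← sum_neg_distrib]
      refine sum_le_sum fun i hi => ?_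
      have : 0 ≤ prefixWeight k i := by
        simp only [S, mem_filter, mem_prefixSet] at hi
        exact prefixWeight_nonneg hi.1.le
      split_ifs <;> linarith
    have hgain : prefixWeight k j / 4 ≤ prefixWeight k j + χ * T := by
      nlinarith [mul_le_mul_of_nonneg_left hsign hχ]
    have hpow : (1 - χ) ^ (k - 1) ≤ (1 - χ) ^ (j : ℕ) :=
      pow_le_pow_of_le_one (sub_nonneg.2 hχ1) (by linarith) (by omega)
    rw [if_pos (by simpa [S] using hjk)]
    calc χ * (1 - χ) ^ (k - 1) / 4 * prefixWeight k j
        = (1 - χ) ^ (k - 1) * χ * (prefixWeight k j / 4) := by ring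
      _ ≤ (1 - χ) ^ (j : ℕ) * χ * (prefixWeight k j + χ * T) := by
        gcongr
        exact div_nonneg (prefixWeight_nonneg hjk.le) zero_le_four
  · have hempty : S.filter (j < ·) = ∅ := by
      ext i
      simp only [S, mem_filter, mem_prefixSet, notMem_empty, iff_false, not_and]
      intro hik hji
      exact hjk ((Fin.lt_def.1 hji).trans hik)
    simp [S, hjk, hempty]

theorem one_step_multiplicative_drift_general
    (n k : ℕ) (χ : ℝ) (hχ0 : 0 < χ)
    (hk1 : 1 ≤ k) (hkχ : (k : ℝ) ≤ 1 / χ)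
    (g : (Fin n → Bool) → ℝ)
    (hg : ∀ x, g x = ∑ i ∈ Finset.univ.filter (fun i : Fin n => (i : ℕ) < k),
      (1 + ((k : ℝ) + 1 - ((i : ℕ) + 1)) / k) * (if x i then 0 else 1))
    (x : Fin n → Bool) (hx : 0 < g x) :
    χ * g x / (4 * Real.exp 1) ≤
      ∑ y : Fin n → Bool, flipProb n χ x y * (g x - g (select n x y)) := by
  obtain rfl : g = prefixPotential k := funext hg
  have hχk : χ * k ≤ 1 := by rwa [le_div_iff₀ hχ0, mul_comm] at hkχ
  have hexp : exp (-1) ≤ (1 - χ) ^ (k - 1) :=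
    exp_neg_one_le_one_sub_pow (by rwa [Nat.cast_pred hk1, sub_add_cancel])
  calc χ * prefixPotential k x / (4 * exp 1) = χ * exp (-1) / 4 * prefixPotential k x := by
        rw [exp_neg]
        field_simp
    _ ≤ χ * (1 - χ) ^ (k - 1) / 4 * prefixPotential k x := by gcongr
    _ ≤ drift χ (prefixPotential k) x := le_drift_prefixPotential hχ0.le hχk x

/-- One-step multiplicative drift of the potential
`g x = ∑_{i=1}^k w_i (1 - x_i)` with `w_i = 1 + (k + 1 - i)/k` for the
(1+1) EA with mutation rate `0 < χ < 1/2`, `k ≤ 1/χ`, on BinVal: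
`E[g x − g x'] ≥ χ · g x / (4e)`, the expectation being over the random mutation. -/
theorem one_step_multiplicative_drift
    (n k : ℕ) (χ : ℝ) (hχ0 : 0 < χ) (hχ1 : χ < 1 / 2)
    (hk1 : 1 ≤ k) (hkn : k ≤ n) (hkχ : (k : ℝ) ≤ 1 / χ)
    (g : (Fin n → Bool) → ℝ)
    (hg : ∀ x, g x = ∑ i ∈ Finset.univ.filter (fun i : Fin n => (i : ℕ) < k),
      (1 + ((k : ℝ) + 1 - ((i : ℕ) + 1)) / k) * (if x i then 0 else 1))
    (x : Fin n → Bool) (hx : 0 < g x) :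
    χ * g x / (4 * Real.exp 1) ≤
      ∑ y : Fin n → Bool, flipProb n χ x y * (g x - g (select n x y)) :=
  one_step_multiplicative_drift_general n k χ hχ0 hk1 hkχ g hg x hx

end
end

section
/- Let n ∈ ℕ with n ≥ 2 and let k ∈ ℕ with 2 ≤ k ≤ n. For the standard (1+1) EA with mutation rate χ = 1/n on BinVal, the expected number of iterations until the first k bits are all set to 1 satisfies E[T_k] ≥ (1/2)·(n − 1)·ln(k)·(1 − e^{−1/2}); in particular E[T_k] = Ω(n log k). -/
open scoped BigOperators ENNReal

noncomputable section

/-- Transition kernel of the (1+1) EA with fixed mutation rate `χ` on BinVal. -/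
def stepKer (n : ℕ) (χ : ℝ) (x x' : Fin n → Bool) : ℝ≥0∞ :=
  ∑ y : Fin n → Bool,
    ENNReal.ofReal (flipProb n χ x y) * (if select n x y = x' then 1 else 0)

/-- `alive init step A t s` is the probability that the Markov chain with initial
distribution `init` and transition kernel `step` is in state `s` at time `t` and
has not yet visited the target set `A` (so `∑' s, alive init step A t s = P(T > t)`
for the first hitting time `T` of `A`). -/
def alive {σ : Type*} (init : σ → ℝ≥0∞) (step : σ → σ → ℝ≥0∞) (A : Set σ) :
    ℕ → σ → ℝ≥0∞
  | 0 => Aᶜ.indicator init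
  | t + 1 => Aᶜ.indicator (fun s' => ∑' s, alive init step A t s * step s s')

/-- Expected first hitting time `E[T] = ∑_{t ≥ 0} P(T > t)` of the target set `A`
for the Markov chain given by `init` and `step`. -/
def hitTimeExp {σ : Type*} (init : σ → ℝ≥0∞) (step : σ → σ → ℝ≥0∞) (A : Set σ) : ℝ≥0∞ :=
  ∑' t : ℕ, ∑' s : σ, alive init step A t s

/-- Target set: the first `k` bits are all `1`. -/
def firstKOnes (n k : ℕ) : Set (Fin n → Bool) :=
  {x | ∀ i : Fin n, (i : ℕ) < k → x i = true}

/-- Uniform initial distribution on `{0,1}^n`. -/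
def uniformInit (n : ℕ) : (Fin n → Bool) → ℝ≥0∞ := fun _ => (2 : ℝ≥0∞)⁻¹ ^ n

/-!
Call a bit among the first `k` *frozen* at time `t` if it was `0` initially and no mutation up to
time `t` has flipped it. Whatever the selection does, a frozen bit keeps its value `0`, so
`T_k > t` as long as some bit is frozen. Tracking the mask of frozen bits next to the search point
gives a chain whose mask marginal is explicit: the `k` leading bits are frozen independently, each
with probability `½ (1 - χ) ^ t`. Hence `P(T_k > t) ≥ 1 - (1 - ½ (1 - 1/n) ^ t) ^ k`, which is at
least `1 - e^{-1/2}` while `t ≤ ½ (n - 1) ln k`, and summing over these `t` bounds `E[T_k]`.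
-/

namespace OnePlusOneEA

open Finset

lemma exp_neg_one_div_sub_one_le_one_sub_one_div {x : ℝ} (hx : 1 < x) :
    Real.exp (-(1 / (x - 1))) ≤ 1 - 1 / x := by
  have hy : 0 < 1 - 1 / x := sub_pos.2 ((div_lt_one (by linarith)).2 hx)
  have : x - 1 ≠ 0 := by linarith
  rw [← Real.le_log_iff_exp_le hy]
  convert Real.one_sub_inv_le_log_of_pos hy using 1
  field_simp
  ring

lemma one_sub_half_pow_pow_le_exp_neg_half {n k t : ℕ} (hn : 2 ≤ n) (hk : 1 ≤ k)
    (ht : (t : ℝ) ≤ 1 / 2 * ((n : ℝ) - 1) * Real.log k) :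
    (1 - 2⁻¹ * (1 - 1 / (n : ℝ)) ^ t) ^ k ≤ Real.exp (-(1 / 2)) := by
  have hn' : (2 : ℝ) ≤ n := by exact_mod_cast hn
  have hk' : (1 : ℝ) ≤ k := by exact_mod_cast hk
  have hpow : Real.exp (-(Real.log k / 2)) ≤ (1 - 1 / (n : ℝ)) ^ t :=
    calc Real.exp (-(Real.log k / 2)) ≤ Real.exp (-(1 / ((n : ℝ) - 1))) ^ t := by
          rw [← Real.exp_nat_mul, Real.exp_le_exp, mul_neg, neg_le_neg_iff,
            ← div_eq_mul_one_div, div_le_iff₀ (by linarith)]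
          linarith
      _ ≤ (1 - 1 / (n : ℝ)) ^ t := pow_le_pow_left₀ (Real.exp_nonneg _)
          (exp_neg_one_div_sub_one_le_one_sub_one_div (by linarith)) t
  have hka : 1 / 2 ≤ k * (2⁻¹ * (1 - 1 / (n : ℝ)) ^ t) :=
    calc (1 : ℝ) / 2 ≤ 2⁻¹ * Real.exp (Real.log k / 2) := by
          have := Real.one_le_exp (div_nonneg (Real.log_nonneg hk') zero_le_two)
          linarith
      _ = k * (2⁻¹ * Real.exp (-(Real.log k / 2))) := by
          nth_rw 2 [← Real.exp_log (by linarith : (0 : ℝ) < k)]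
          rw [mul_left_comm, ← Real.exp_add]
          ring_nf
      _ ≤ k * (2⁻¹ * (1 - 1 / (n : ℝ)) ^ t) := by gcongr
  have ha : 2⁻¹ * (1 - 1 / (n : ℝ)) ^ t ≤ 1 := by
    have hχ : 1 / (n : ℝ) ≤ 1 := (div_le_one (by linarith)).2 (by linarith)
    have := pow_le_one₀ (n := t) (sub_nonneg.2 hχ) (sub_le_self 1 (by positivity))
    linarith
  calc (1 - 2⁻¹ * (1 - 1 / (n : ℝ)) ^ t) ^ k
      = (1 - k * (2⁻¹ * (1 - 1 / (n : ℝ)) ^ t) / k) ^ k := by field_simp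
    _ ≤ Real.exp (-(k * (2⁻¹ * (1 - 1 / (n : ℝ)) ^ t))) :=
        Real.one_sub_div_pow_le_exp_neg (by nlinarith)
    _ ≤ Real.exp (-(1 / 2)) := by gcongr

lemma sum_pi_bool_prod {ι R : Type*} [Fintype ι] [DecidableEq ι] [CommSemiring R]
    (F : ι → Bool → R) : ∑ y : ι → Bool, ∏ i, F i (y i) = ∏ i, (F i true + F i false) := by
  simp [← Fintype.prod_sum, add_comm]

lemma ite_eq_prod_ite {ι α M : Type*} [Fintype ι] [DecidableEq α] [CommMonoidWithZero M]
    (f g : ι → α) (c : ι → M) :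
    (if f = g then ∏ i, c i else 0) = ∏ i, if f i = g i then c i else 0 := by
  simp [Fintype.prod_ite_zero, funext_iff]

def bernWeight (p : ℝ) (c : Bool) : ℝ≥0∞ := ENNReal.ofReal (if c then p else 1 - p)

section bernWeight

variable {p q : ℝ}

lemma bernWeight_true_add_false (hp0 : 0 ≤ p) (hp1 : p ≤ 1) :
    bernWeight p true + bernWeight p false = 1 := by
  simp [bernWeight, ← ENNReal.ofReal_add hp0 (sub_nonneg.2 hp1)]

lemma bernWeight_true_mul_add (hp0 : 0 ≤ p) (hp1 : p ≤ 1) (hq0 : 0 ≤ q) (hq1 : q ≤ 1)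
    (c : Bool) :
    bernWeight p true * bernWeight q c + bernWeight p false * bernWeight 0 c =
      bernWeight (p * q) c := by
  have := mul_le_one₀ hp1 hq0 hq1
  cases c
  · simp [bernWeight, ← ENNReal.ofReal_mul, ← ENNReal.ofReal_add, *, mul_nonneg]
    ring_nf
  · simp [bernWeight, ← ENNReal.ofReal_mul, *]

end bernWeight

variable {n : ℕ}

lemma select_apply_of_eq {x y : Fin n → Bool} {i : Fin n} (h : y i = x i) :
    select n x y i = x i := by
  unfold select
  split_ifs <;> simp [h]

def zeroMask (k : ℕ) (x : Fin n → Bool) : Fin n → Bool :=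
  fun i => decide ((i : ℕ) < k) && !x i

lemma zeroMask_eq_bot {k : ℕ} {x : Fin n → Bool} (hx : x ∈ firstKOnes n k) :
    zeroMask k x = ⊥ := by
  funext i
  by_cases hi : (i : ℕ) < k <;> simp [zeroMask, hi, hx i]

def keepUnflipped (m x y : Fin n → Bool) : Fin n → Bool := fun i => m i && (y i == x i)

variable (n) in
/-- Transition kernel of the pair (search point, mask of frozen bits). -/
def maskedKer (χ : ℝ) (x m x' m' : Fin n → Bool) : ℝ≥0∞ :=
  ∑ y, ENNReal.ofReal (flipProb n χ x y) * (if select n x y = x' then 1 else 0) *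
    (if m' = keepUnflipped m x y then 1 else 0)

variable (n) in
def maskedLaw (k : ℕ) (χ : ℝ) : ℕ → (Fin n → Bool) → (Fin n → Bool) → ℝ≥0∞
  | 0 => fun x m => if m = zeroMask k x then uniformInit n x else 0
  | t + 1 => fun x' m' => ∑ x, ∑ m, maskedLaw k χ t x m * maskedKer n χ x m x' m'

section kernel

variable {χ : ℝ} {x m x' m' : Fin n → Bool}

lemma ofReal_flipProb (hχ0 : 0 ≤ χ) (hχ1 : χ ≤ 1) (y : Fin n → Bool) :
    ENNReal.ofReal (flipProb n χ x y) = ∏ i, ENNReal.ofReal (if x i = y i then 1 - χ else χ) :=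
  ENNReal.ofReal_prod_of_nonneg fun i _ => by split_ifs <;> linarith

lemma sum_maskedKer_eq_stepKer : ∑ m', maskedKer n χ x m x' m' = stepKer n χ x x' := by
  simp only [maskedKer, stepKer]
  rw [sum_comm]
  simp

lemma maskedKer_bot_left (hm' : m' ≠ ⊥) : maskedKer n χ x ⊥ x' m' = 0 := by
  have : keepUnflipped ⊥ x = fun _ => ⊥ := by funext y i; simp [keepUnflipped]
  simp [maskedKer, this, hm']

lemma sum_maskedKer_eq_prod_bernWeight (hχ0 : 0 ≤ χ) (hχ1 : χ ≤ 1) :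
    ∑ x', maskedKer n χ x m x' m' = ∏ i, bernWeight (if m i then 1 - χ else 0) (m' i) := by
  have hflip : ∀ y, ∑ x'', ENNReal.ofReal (flipProb n χ x y) *
      (if select n x y = x'' then 1 else 0) * (if m' = keepUnflipped m x y then 1 else 0) =
        ∏ i, if m' i = (m i && y i == x i) then
          ENNReal.ofReal (if x i = y i then 1 - χ else χ) else 0 := by
    intro y
    rw [← sum_mul, ← mul_sum, sum_ite_eq, if_pos (mem_univ _), mul_one, mul_ite, mul_one,
      mul_zero, ofReal_flipProb hχ0 hχ1]
    exact ite_eq_prod_ite _ _ _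
  simp only [maskedKer]
  rw [sum_comm, sum_congr rfl fun y _ => hflip y, sum_pi_bool_prod fun i b =>
    if m' i = (m i && b == x i) then ENNReal.ofReal (if x i = b then 1 - χ else χ) else 0]
  refine prod_congr rfl fun i _ => ?_
  have := bernWeight_true_add_false hχ0 hχ1
  cases x i <;> cases m i <;> cases m' i <;> simp_all [bernWeight, add_comm]

end kernel

section law

variable {k : ℕ} {χ : ℝ}

lemma le_zeroMask_of_maskedLaw_ne_zero {t : ℕ} {x m : Fin n → Bool}
    (h : maskedLaw n k χ t x m ≠ 0) :
    m ≤ zeroMask k x := by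
  induction t generalizing x m with
  | zero =>
    simp only [maskedLaw, ne_eq, ite_eq_right_iff, Classical.not_imp] at h
    exact h.1.le
  | succ t ih =>
    obtain ⟨x₀, -, h⟩ := exists_ne_zero_of_sum_ne_zero h
    obtain ⟨m₀, -, h⟩ := exists_ne_zero_of_sum_ne_zero h
    have hle := ih (left_ne_zero_of_mul h)
    obtain ⟨y, -, hy⟩ := exists_ne_zero_of_sum_ne_zero (right_ne_zero_of_mul h)
    obtain rfl : select n x₀ y = x := by by_contra hc; simp [hc] at hy
    obtain rfl : m = keepUnflipped m₀ x₀ y := by by_contra hc; simp [hc] at hy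
    intro i
    by_cases hyi : y i = x₀ i
    · simpa [keepUnflipped, zeroMask, hyi, select_apply_of_eq hyi] using hle i
    · simp [keepUnflipped, beq_false_of_ne hyi]

variable (k) in
def maskProb (χ : ℝ) (t : ℕ) (i : Fin n) : ℝ :=
  (if (i : ℕ) < k then 2⁻¹ else 0) * (1 - χ) ^ t

lemma maskProb_nonneg (hχ1 : χ ≤ 1) (t : ℕ) (i : Fin n) : 0 ≤ maskProb k χ t i := by
  unfold maskProb
  split_ifs <;> positivity

lemma maskProb_le_one (hχ0 : 0 ≤ χ) (hχ1 : χ ≤ 1) (t : ℕ) (i : Fin n) :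
    maskProb k χ t i ≤ 1 := by
  unfold maskProb
  have := pow_le_one₀ (sub_nonneg.2 hχ1) (sub_le_self 1 hχ0) (n := t)
  split_ifs <;> nlinarith

lemma maskProb_succ (t : ℕ) (i : Fin n) :
    maskProb k χ (t + 1) i = maskProb k χ t i * (1 - χ) := by
  simp only [maskProb, pow_succ, mul_assoc]

lemma prod_one_sub_maskProb (hkn : k ≤ n) (t : ℕ) :
    ∏ i : Fin n, (1 - maskProb k χ t i) = (1 - 2⁻¹ * (1 - χ) ^ t) ^ k := by
  simp [maskProb, apply_ite, prod_ite, Fin.card_filter_val_lt, hkn]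

lemma sum_maskedLaw_eq_prod_bernWeight (hχ0 : 0 ≤ χ) (hχ1 : χ ≤ 1) (t : ℕ)
    (m : Fin n → Bool) :
    ∑ x, maskedLaw n k χ t x m = ∏ i, bernWeight (maskProb k χ t i) (m i) := by
  induction t generalizing m with
  | zero =>
    have hinit (x : Fin n → Bool) : uniformInit n x = ∏ _i : Fin n, 2⁻¹ := by
      simp [uniformInit]
    simp only [maskedLaw, hinit, ite_eq_prod_ite]
    refine (sum_pi_bool_prod fun i b =>
      if m i = (decide ((i : ℕ) < k) && !b) then (2⁻¹ : ℝ≥0∞) else 0).trans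
      (prod_congr rfl fun i _ => ?_)
    have : (1 : ℝ) - 2⁻¹ = 2⁻¹ := by norm_num
    by_cases hi : (i : ℕ) < k <;> cases m i <;>
      simp [maskProb, bernWeight, hi, this, ENNReal.inv_two_add_inv_two]
  | succ t ih =>
    calc ∑ x', maskedLaw n k χ (t + 1) x' m
        = ∑ m₀, (∑ x, maskedLaw n k χ t x m₀) *
            ∏ i, bernWeight (if m₀ i then 1 - χ else 0) (m i) := by
          simp only [maskedLaw]
          rw [sum_comm]
          refine (sum_congr rfl fun x _ => sum_comm).trans ?_
          simp only [← mul_sum, sum_maskedKer_eq_prod_bernWeight hχ0 hχ1, sum_mul]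
          exact sum_comm
      _ = ∑ m₀ : Fin n → Bool, ∏ i, bernWeight (maskProb k χ t i) (m₀ i) *
            bernWeight (if m₀ i then 1 - χ else 0) (m i) := by
          simp only [ih, prod_mul_distrib]
      _ = ∏ i, bernWeight (maskProb k χ (t + 1) i) (m i) := by
          rw [sum_pi_bool_prod fun i b => bernWeight (maskProb k χ t i) b *
            bernWeight (if b then 1 - χ else 0) (m i)]
          simp only [if_true, Bool.false_eq_true, if_false, maskProb_succ]
          exact prod_congr rfl fun i _ => bernWeight_true_mul_add (maskProb_nonneg hχ1 t i)
            (maskProb_le_one hχ0 hχ1 t i) (sub_nonneg.2 hχ1) (sub_le_self 1 hχ0) (m i)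

lemma sum_maskedLaw_erase_bot_of_mem {t : ℕ} {x : Fin n → Bool} (hx : x ∈ firstKOnes n k) :
    ∑ m ∈ univ.erase ⊥, maskedLaw n k χ t x m = 0 :=
  sum_eq_zero fun _ hm => by
    by_contra h
    exact ne_of_mem_erase hm
      (le_bot_iff.1 (zeroMask_eq_bot hx ▸ le_zeroMask_of_maskedLaw_ne_zero h))

lemma sum_maskedLaw_erase_bot_le_alive (t : ℕ) (x : Fin n → Bool) :
    ∑ m ∈ univ.erase ⊥, maskedLaw n k χ t x m ≤
      alive (uniformInit n) (stepKer n χ) (firstKOnes n k) t x := by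
  by_cases hx : x ∈ firstKOnes n k
  · simp [sum_maskedLaw_erase_bot_of_mem hx]
  induction t generalizing x with
  | zero =>
    rw [alive, Set.indicator_of_mem (Set.mem_compl hx)]
    calc ∑ m ∈ univ.erase ⊥, maskedLaw n k χ 0 x m
        ≤ ∑ m, maskedLaw n k χ 0 x m := sum_le_sum_of_subset (subset_univ _)
      _ = uniformInit n x := by simp [maskedLaw]
  | succ t ih =>
    rw [alive, Set.indicator_of_mem (Set.mem_compl hx), tsum_fintype]
    calc ∑ m' ∈ univ.erase ⊥, maskedLaw n k χ (t + 1) x m'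
        = ∑ x₀, ∑ m, maskedLaw n k χ t x₀ m *
            ∑ m' ∈ univ.erase ⊥, maskedKer n χ x₀ m x m' := by
          simp only [maskedLaw, mul_sum]
          rw [sum_comm]
          exact sum_congr rfl fun _ _ => sum_comm
      _ = ∑ x₀, ∑ m ∈ univ.erase ⊥, maskedLaw n k χ t x₀ m *
            ∑ m' ∈ univ.erase ⊥, maskedKer n χ x₀ m x m' := by
          refine sum_congr rfl fun x₀ _ => (sum_erase _ ?_).symm
          simp [sum_eq_zero fun m' hm' => maskedKer_bot_left (ne_of_mem_erase hm')]
      _ ≤ ∑ x₀, (∑ m ∈ univ.erase ⊥, maskedLaw n k χ t x₀ m) * stepKer n χ x₀ x := by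
          simp only [sum_mul]
          gcongr
          rw [← sum_maskedKer_eq_stepKer]
          exact sum_le_sum_of_subset (subset_univ _)
      _ ≤ ∑ x₀, alive (uniformInit n) (stepKer n χ) (firstKOnes n k) t x₀ *
            stepKer n χ x₀ x := by
          gcongr with x₀
          by_cases hx₀ : x₀ ∈ firstKOnes n k
          · simp [sum_maskedLaw_erase_bot_of_mem hx₀]
          · exact ih x₀ hx₀

lemma one_sub_pow_le_sum_alive (hχ0 : 0 ≤ χ) (hχ1 : χ ≤ 1) (hkn : k ≤ n) (t : ℕ) :
    ENNReal.ofReal (1 - (1 - 2⁻¹ * (1 - χ) ^ t) ^ k) ≤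
      ∑ x, alive (uniformInit n) (stepKer n χ) (firstKOnes n k) t x := by
  set P := fun m : Fin n → Bool => ∏ i, bernWeight (maskProb k χ t i) (m i)
  have htotal : P ⊥ + ∑ m ∈ univ.erase ⊥, P m = 1 := by
    rw [add_sum_erase _ _ (mem_univ _), sum_pi_bool_prod]
    exact prod_eq_one fun i _ =>
      bernWeight_true_add_false (maskProb_nonneg hχ1 t i) (maskProb_le_one hχ0 hχ1 t i)
  have hnonneg : ∀ i ∈ (univ : Finset (Fin n)), 0 ≤ 1 - maskProb k χ t i :=
    fun i _ => sub_nonneg.2 (maskProb_le_one hχ0 hχ1 t i)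
  have hbot : P ⊥ = ENNReal.ofReal ((1 - 2⁻¹ * (1 - χ) ^ t) ^ k) := by
    simp only [P, Pi.bot_apply, bot_eq_false, bernWeight, Bool.false_eq_true, if_false]
    rw [← ENNReal.ofReal_prod_of_nonneg hnonneg, prod_one_sub_maskProb hkn]
  calc ENNReal.ofReal (1 - (1 - 2⁻¹ * (1 - χ) ^ t) ^ k)
      = 1 - P ⊥ := by
        rw [hbot, ENNReal.ofReal_sub _ (prod_one_sub_maskProb hkn t ▸ prod_nonneg hnonneg),
          ENNReal.ofReal_one]
    _ = ∑ m ∈ univ.erase ⊥, P m :=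
        (ENNReal.eq_sub_of_add_eq (hbot ▸ ENNReal.ofReal_ne_top)
          ((add_comm _ _).trans htotal)).symm
    _ = ∑ x, ∑ m ∈ univ.erase ⊥, maskedLaw n k χ t x m := by
        simp only [P, ← sum_maskedLaw_eq_prod_bernWeight hχ0 hχ1]
        exact sum_comm
    _ ≤ _ := sum_le_sum fun x _ => sum_maskedLaw_erase_bot_le_alive t x

end law

end OnePlusOneEA

theorem ea_standard_fixed_target_lower_general
    (n k : ℕ) (hk2 : 2 ≤ k) (hkn : k ≤ n) :
    ENNReal.ofReal ((1 / 2) * ((n : ℝ) - 1) * Real.log k * (1 - Real.exp (-(1 / 2)))) ≤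
      hitTimeExp (uniformInit n) (stepKer n (1 / n)) (firstKOnes n k) := by
  have hn : 2 ≤ n := hk2.trans hkn
  have hχ0 : (0 : ℝ) ≤ 1 / n := by positivity
  have hχ1 : (1 : ℝ) / n ≤ 1 :=
    div_le_one_of_le₀ (by exact_mod_cast hn.trans' one_le_two) (by positivity)
  set c := 1 / 2 * ((n : ℝ) - 1) * Real.log k
  calc ENNReal.ofReal (c * (1 - Real.exp (-(1 / 2))))
      ≤ ⌈c⌉₊ * ENNReal.ofReal (1 - Real.exp (-(1 / 2))) := by
        rw [ENNReal.ofReal_mul' (sub_nonneg.2 (Real.exp_le_one_iff.2 (by norm_num))),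
          ← ENNReal.ofReal_natCast]
        gcongr
        exact Nat.le_ceil c
    _ = ∑ t ∈ Finset.range ⌈c⌉₊, ENNReal.ofReal (1 - Real.exp (-(1 / 2))) := by simp
    _ ≤ ∑ t ∈ Finset.range ⌈c⌉₊,
          ENNReal.ofReal (1 - (1 - 2⁻¹ * (1 - 1 / (n : ℝ)) ^ t) ^ k) := by
        gcongr with t ht
        exact OnePlusOneEA.one_sub_half_pow_pow_le_exp_neg_half hn (by omega)
          (Nat.lt_ceil.1 (Finset.mem_range.1 ht)).le
    _ ≤ ∑ t ∈ Finset.range ⌈c⌉₊,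
          ∑ x, alive (uniformInit n) (stepKer n (1 / n)) (firstKOnes n k) t x := by
        gcongr with t
        exact OnePlusOneEA.one_sub_pow_le_sum_alive hχ0 hχ1 hkn t
    _ ≤ hitTimeExp (uniformInit n) (stepKer n (1 / n)) (firstKOnes n k) := by
        simp only [hitTimeExp, tsum_fintype]
        exact ENNReal.sum_le_tsum _

/-- Fixed-target lower bound for the standard (1+1) EA with mutation rate `χ = 1/n`
on BinVal (`n ≥ 2`, `2 ≤ k ≤ n`):
`E[T_k] ≥ (1/2)·(n − 1)·ln k·(1 − e^{−1/2})`, i.e. `E[T_k] = Ω(n log k)`. -/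
theorem ea_standard_fixed_target_lower
    (n k : ℕ) (hn : 2 ≤ n) (hk2 : 2 ≤ k) (hkn : k ≤ n) :
    ENNReal.ofReal ((1 / 2) * ((n : ℝ) - 1) * Real.log k * (1 - Real.exp (-(1 / 2)))) ≤
      hitTimeExp (uniformInit n) (stepKer n (1 / n)) (firstKOnes n k) :=
  ea_standard_fixed_target_lower_general n k hk2 hkn
end
end

section
/- Drift-transfer under logarithmic rescaling: Let g_min ≥ 1 and g ≥ g_min be real numbers, let ζ ≥ 0, and let G' be an integrable real-valued random variable with G' ≥ 0 almost surely and E[g − G'] ≥ ζ·g. Then E[ln(1 + g/g_min) − ln(1 + G'/g_min)] ≥ ζ/2. (In particular, a multiplicative drift of factor ζ for a potential g that stays above g_min translates into an additive drift of at least ζ/2 for the rescaled potential h₁ = ln(1 + g/g_min).) -/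
/-!
The rescaling `h(x) = log (1 + x / g_min)` is concave, so it lies below its tangent at `g`:
`h(g) - h(x) ≥ (g - x) / (g_min + g)`. Taking expectations turns the multiplicative drift
`E[g - G'] ≥ ζ g` into `E[h(g) - h(G')] ≥ ζ g / (g_min + g)`, and `g ≥ g_min` makes the factor
`g / (g_min + g)` at least `1 / 2`.
-/

open MeasureTheory Real

lemma sub_div_le_log_sub_log {x y : ℝ} (hx : 0 < x) (hy : 0 < y) :
    (x - y) / x ≤ log x - log y := by
  have h := one_sub_inv_le_log_of_pos (div_pos hx hy)
  rw [log_div hx.ne' hy.ne', inv_div] at h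
  rwa [sub_div, div_self hx.ne']

lemma sub_div_add_le_log_one_add_div_sub {c a b : ℝ} (hc : 0 < c) (ha : 0 ≤ a) (hb : 0 ≤ b) :
    (a - b) / (c + a) ≤ log (1 + a / c) - log (1 + b / c) := by
  have key := sub_div_le_log_sub_log (x := 1 + a / c) (y := 1 + b / c) (by positivity)
    (by positivity)
  have hrw : (1 + a / c - (1 + b / c)) / (1 + a / c) = (a - b) / (c + a) := by
    field_simp
    ring
  rwa [hrw] at key

lemma MeasureTheory.Integrable.log_one_add {Ω : Type*} [MeasurableSpace Ω] {μ : Measure Ω} {f : Ω → ℝ}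
    (hf : Integrable f μ) (hf0 : ∀ᵐ ω ∂μ, 0 ≤ f ω) :
    Integrable (fun ω => log (1 + f ω)) μ := by
  refine hf.mono ?_ ?_
  · exact (measurable_log.comp_aemeasurable (hf.aemeasurable.const_add 1)).aestronglyMeasurable
  · filter_upwards [hf0] with ω hω
    rw [norm_of_nonneg (log_nonneg (by linarith)), norm_of_nonneg hω]
    linarith [log_le_sub_one_of_pos (show 0 < 1 + f ω by linarith)]

lemma half_le_mul_div_add {ζ c g : ℝ} (hζ : 0 ≤ ζ) (hc : 0 < c) (hcg : c ≤ g) :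
    ζ / 2 ≤ ζ * g / (c + g) := by
  rw [div_le_div_iff₀ two_pos (by linarith)]
  nlinarith

/-- **Drift transfer under logarithmic rescaling.**
If `g_min ≥ 1`, `g ≥ g_min`, `ζ ≥ 0`, and `G'` is an integrable nonnegative random
variable with `E[g − G'] ≥ ζ·g`, then
`E[ln(1 + g/g_min) − ln(1 + G'/g_min)] ≥ ζ/2`. -/
theorem drift_transfer_log_rescaling
    {Ω : Type*} [MeasurableSpace Ω] (μ : Measure Ω) [IsProbabilityMeasure μ]
    (gmin g ζ : ℝ) (hgmin : 1 ≤ gmin) (hg : gmin ≤ g) (hζ : 0 ≤ ζ)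
    (G' : Ω → ℝ) (hint : Integrable G' μ) (hpos : ∀ᵐ ω ∂μ, 0 ≤ G' ω)
    (hdrift : ζ * g ≤ ∫ ω, (g - G' ω) ∂μ) :
    ζ / 2 ≤ ∫ ω, (Real.log (1 + g / gmin) - Real.log (1 + G' ω / gmin)) ∂μ := by
  have hgmin0 : 0 < gmin := by linarith
  have htangent : ∀ᵐ ω ∂μ, (g - G' ω) / (gmin + g) ≤
      log (1 + g / gmin) - log (1 + G' ω / gmin) := by
    filter_upwards [hpos] with ω hω
    exact sub_div_add_le_log_one_add_div_sub hgmin0 (by linarith) hω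
  have hlog_int : Integrable (fun ω => log (1 + G' ω / gmin)) μ :=
    (hint.div_const gmin).log_one_add (by filter_upwards [hpos] with ω hω; positivity)
  calc ζ / 2 ≤ ζ * g / (gmin + g) := half_le_mul_div_add hζ hgmin0 hg
    _ ≤ (∫ ω, (g - G' ω) ∂μ) / (gmin + g) := by gcongr; linarith
    _ = ∫ ω, (g - G' ω) / (gmin + g) ∂μ := (integral_div _ _).symm
    _ ≤ _ := integral_mono_ae (((integrable_const g).sub hint).div_const _)
      ((integrable_const _).sub hlog_int) htangent
end

section
/- Let n, r ∈ ℕ with 2^r ≤ n, let d > 1 with d/2^r < 1, let α > 2, and set χ_opt = 1/2^r. Define weights g_i = (1 + (α·d·χ_opt)/(1 − d·χ_opt)^{2^r − 1})^{2^r − i} for i ∈ {1,…,2^r} and the potential g(x) = Σ_{i=1}^{2^r} g_i·(1 − x_i) for x ∈ {0,1}^n. Then for every mutation rate χ with 0 < χ ≤ d·χ_opt and every current point x ∈ {0,1}^n, one step of the (1+1) EA with mutation rate χ on BinVal satisfies E[g(x) − g(x')] ≥ χ·(1 − χ)^{2^r − 1}·(1 − 1/α)·g(x), where x' is the next point and the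 expectation is over the random mutation. -/
open scoped BigOperators

noncomputable section

/-!
Sort the offspring `y` by the first position `j` at which it differs from `x`. If `x j = 1`, `y`
is worse and is rejected; if `x j = 0`, it is accepted, gains the weight `g_j` and loses at most
the weights of the later bits that flipped. The event "first difference at `j`" has probability
`(1 - χ)^j χ`, and on it every later bit still flips with probability `χ`, so the expected gain
from `j` is at least `(1 - χ)^j χ (g_j - χ ∑_{k > j} g_k)`. The weights grow geometrically with
ratio `1 + c`, where `c ≥ α χ`, hence `χ ∑_{k > j} g_k ≤ g_j / α`.
-/

open Finset

lemma Finset.sum_univ_eq_sum_Iio_add_add_sum_Ioi {α M : Type*} [Fintype α] [LinearOrder α]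
    [LocallyFiniteOrderBot α] [LocallyFiniteOrderTop α] [AddCommMonoid M] (f : α → M) (a : α) :
    ∑ i, f i = ∑ i ∈ Iio a, f i + f a + ∑ i ∈ Ioi a, f i := by
  rw [add_assoc, ← sum_cons (f := f) notMem_Ioi_self, ← Ici_eq_cons_Ioi,
    ← sum_filter_add_sum_filter_not univ (· < a)]
  congr 2 <;> ext <;> simp

variable {n : ℕ}

def IsFirstDiff (x y : Fin n → Bool) (j : Fin n) : Prop :=
  (∀ i < j, y i = x i) ∧ y j ≠ x j

instance (x y : Fin n → Bool) (j : Fin n) : Decidable (IsFirstDiff x y j) := by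
  unfold IsFirstDiff; infer_instance

namespace IsFirstDiff

variable {x y : Fin n → Bool} {j : Fin n}

lemma symm (h : IsFirstDiff x y j) : IsFirstDiff y x j :=
  ⟨fun i hi => (h.1 i hi).symm, h.2.symm⟩

lemma eq {k : Fin n} (hj : IsFirstDiff x y j) (hk : IsFirstDiff x y k) : j = k := by
  by_contra hne
  rcases lt_or_gt_of_ne hne with h | h
  · exact hj.2 (hk.1 j h)
  · exact hk.2 (hj.1 k h)

end IsFirstDiff

lemma exists_isFirstDiff {x y : Fin n → Bool} (h : y ≠ x) : ∃ j, IsFirstDiff x y j := by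
  set s := univ.filter fun i => y i ≠ x i
  have hs : s.Nonempty := by simpa [s, Finset.Nonempty] using Function.ne_iff.mp h
  refine ⟨s.min' hs, fun i hi => ?_, (mem_filter.mp (s.min'_mem hs)).2⟩
  by_contra hne
  exact (s.min'_le i (by simpa [s] using hne)).not_gt hi

lemma sum_Ioi_ite_two_pow_lt (z : Fin n → Bool) (j : Fin n) :
    ∑ i ∈ Ioi j, (if z i then 2 ^ (n - 1 - (i : ℕ)) else 0) < 2 ^ (n - 1 - (j : ℕ)) := by
  have hinj : Set.InjOn (fun i : Fin n => n - 1 - (i : ℕ)) (Ioi j) := by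
    intro a _ b _ hab
    simp only at hab
    omega
  calc ∑ i ∈ Ioi j, (if z i then 2 ^ (n - 1 - (i : ℕ)) else 0)
      ≤ ∑ i ∈ Ioi j, 2 ^ (n - 1 - (i : ℕ)) := sum_le_sum fun i _ => by split <;> simp
    _ = ∑ e ∈ (Ioi j).image fun i : Fin n => n - 1 - (i : ℕ), 2 ^ e := (sum_image hinj).symm
    _ < 2 ^ (n - 1 - (j : ℕ)) := Nat.geomSum_lt le_rfl <| by
        simp only [mem_image, mem_Ioi, forall_exists_index, and_imp, forall_apply_eq_imp_iff₂]
        omega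

lemma binVal_lt_of_isFirstDiff {x y : Fin n → Bool} {j : Fin n} (h : IsFirstDiff x y j)
    (hxj : x j = false) : binVal n x < binVal n y := by
  have hyj : y j = true := by simpa [hxj] using h.2
  have hhead : ∑ i ∈ Iio j, (if y i then 2 ^ (n - 1 - (i : ℕ)) else 0) =
      ∑ i ∈ Iio j, (if x i then 2 ^ (n - 1 - (i : ℕ)) else 0) :=
    sum_congr rfl fun i hi => by rw [h.1 i (mem_Iio.mp hi)]
  have htail := sum_Ioi_ite_two_pow_lt x j
  rw [binVal, binVal, sum_univ_eq_sum_Iio_add_add_sum_Ioi _ j,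
    sum_univ_eq_sum_Iio_add_add_sum_Ioi _ j, hhead, hxj, hyj]
  simp only [Bool.false_eq_true, if_false, if_true]
  omega

lemma select_eq_right_of_isFirstDiff {x y : Fin n → Bool} {j : Fin n} (h : IsFirstDiff x y j)
    (hxj : x j = false) : select n x y = y :=
  if_pos (binVal_lt_of_isFirstDiff h hxj).le

lemma select_eq_left_of_isFirstDiff {x y : Fin n → Bool} {j : Fin n} (h : IsFirstDiff x y j)
    (hxj : x j = true) : select n x y = x :=
  if_neg (binVal_lt_of_isFirstDiff h.symm (by simpa [hxj] using h.2)).not_ge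

lemma flipProb_nonneg {χ : ℝ} (hχ0 : 0 ≤ χ) (hχ1 : χ ≤ 1) (x y : Fin n → Bool) :
    0 ≤ flipProb n χ x y :=
  prod_nonneg fun i _ => by split_ifs <;> linarith

lemma sum_flipProb_filter_ne_and_eq (x : Fin n → Bool) (χ : ℝ) {S T : Finset (Fin n)}
    (hST : Disjoint S T) :
    ∑ y with (∀ i ∈ S, y i ≠ x i) ∧ ∀ i ∈ T, y i = x i, flipProb n χ x y =
      χ ^ #S * (1 - χ) ^ #T := by
  set c : Fin n → Bool → ℝ := fun i b =>
    if i ∈ S then (if b ≠ x i then 1 else 0) else if i ∈ T then (if b = x i then 1 else 0) else 1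
  set q : Fin n → Bool → ℝ := fun i b => (if x i = b then 1 - χ else χ) * c i b
  -- the indicator of the event is the product of the one-bit indicators `c i`, so the sum over
  -- `y` factorises into a product of sums over a single bit
  have hc : ∀ y : Fin n → Bool, ∏ i, c i (y i) =
      if (∀ i ∈ S, y i ≠ x i) ∧ ∀ i ∈ T, y i = x i then 1 else 0 := by
    intro y
    split_ifs with hy
    · refine prod_eq_one fun i _ => ?_
      by_cases hS : i ∈ S
      · simp [c, hS, hy.1 i hS]
      · by_cases hT : i ∈ T <;> simp [c, hS, hT, hy.2 i]
    · simp only [not_and_or, not_forall, not_not] at hy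
      rcases hy with ⟨i, hS, hi⟩ | ⟨i, hT, hi⟩
      · exact prod_eq_zero (mem_univ i) (by simp [c, hS, hi])
      · exact prod_eq_zero (mem_univ i) (by simp [c, hT, hi, disjoint_right.mp hST hT])
  have hq : ∀ i, ∑ b, q i b = (if i ∈ S then χ else 1) * (if i ∈ T then 1 - χ else 1) := by
    intro i
    by_cases hS : i ∈ S
    · cases hx : x i <;> simp [q, c, hS, hx, disjoint_left.mp hST hS]
    · by_cases hT : i ∈ T <;> cases hx : x i <;> simp [q, c, hS, hT, hx]
  calc ∑ y with (∀ i ∈ S, y i ≠ x i) ∧ ∀ i ∈ T, y i = x i, flipProb n χ x y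
      = ∑ y : Fin n → Bool, ∏ i, q i (y i) := by
        rw [sum_filter]
        refine sum_congr rfl fun y _ => ?_
        rw [show ∏ i, q i (y i) = flipProb n χ x y * ∏ i, c i (y i) from prod_mul_distrib, hc,
          mul_ite, mul_one, mul_zero]
    _ = ∏ i, ∑ b, q i b := by rw [Fintype.prod_sum]
    _ = χ ^ #S * (1 - χ) ^ #T := by
        simp_rw [hq, prod_mul_distrib, prod_ite_mem, univ_inter, prod_const]

lemma sum_flipProb_isFirstDiff (x : Fin n → Bool) (χ : ℝ) (j : Fin n) :
    ∑ y with IsFirstDiff x y j, flipProb n χ x y = (1 - χ) ^ (j : ℕ) * χ := by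
  have h := sum_flipProb_filter_ne_and_eq x χ (S := {j}) (T := Iio j) (by simp)
  rw [card_singleton, Fin.card_Iio, pow_one, mul_comm] at h
  rw [← h]
  refine sum_congr (filter_congr fun y _ => ?_) fun _ _ => rfl
  simp [IsFirstDiff, and_comm]

lemma sum_flipProb_isFirstDiff_and_ne (x : Fin n → Bool) (χ : ℝ) {j k : Fin n} (hjk : j < k) :
    ∑ y with IsFirstDiff x y j ∧ y k ≠ x k, flipProb n χ x y = (1 - χ) ^ (j : ℕ) * χ * χ := by
  have h := sum_flipProb_filter_ne_and_eq x χ (S := {j, k}) (T := Iio j)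
    (by simp [hjk.not_gt])
  rw [card_pair hjk.ne, Fin.card_Iio] at h
  rw [show (1 - χ) ^ (j : ℕ) * χ * χ = χ ^ 2 * (1 - χ) ^ (j : ℕ) by ring, ← h]
  refine sum_congr (filter_congr fun y _ => ?_) fun _ _ => rfl
  simp only [IsFirstDiff, ne_eq, mem_insert, mem_singleton, forall_eq_or_imp, forall_eq, mem_Iio]
  tauto

def weightedZeros (G : Fin n → ℝ) (z : Fin n → Bool) : ℝ :=
  ∑ i with z i = false, G i

lemma sub_sum_Ioi_le_weightedZeros_sub {G : Fin n → ℝ} (hG : ∀ i, 0 ≤ G i)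
    {x y : Fin n → Bool} {j : Fin n} (h : IsFirstDiff x y j) (hxj : x j = false) :
    G j - ∑ k ∈ Ioi j, (if y k ≠ x k then G k else 0) ≤ weightedZeros G x - weightedZeros G y := by
  have hyj : y j = true := by simpa [hxj] using h.2
  rw [weightedZeros, weightedZeros, sum_filter, sum_filter, ← sum_sub_distrib,
    sum_univ_eq_sum_Iio_add_add_sum_Ioi _ j,
    sum_eq_zero (s := Iio j) fun i hi => by rw [h.1 i (mem_Iio.mp hi), sub_self]]
  have htail : ∀ k ∈ Ioi j, -(if y k ≠ x k then G k else 0) ≤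
      (if x k = false then G k else 0) - (if y k = false then G k else 0) := by
    intro k _
    have := hG k
    cases x k <;> cases y k <;> simp [this]
  simp only [hxj, hyj, if_true, Bool.true_eq_false, if_false, sub_zero]
  linarith [(sum_neg_distrib ..).symm.trans_le (sum_le_sum htail)]

lemma sum_isFirstDiff_le_weightedZeros_sub_select {G : Fin n → ℝ} (hG : ∀ i, 0 ≤ G i)
    (x y : Fin n → Bool) :
    ∑ j with x j = false,
        (if IsFirstDiff x y j then G j - ∑ k ∈ Ioi j, (if y k ≠ x k then G k else 0) else 0) ≤
      weightedZeros G x - weightedZeros G (select n x y) := by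
  by_cases hyx : y = x
  · subst hyx
    simp [IsFirstDiff, select]
  obtain ⟨j, hj⟩ := exists_isFirstDiff hyx
  have hothers : ∀ k, k ≠ j → ¬ IsFirstDiff x y k := fun k hkj hk => hkj (hk.eq hj)
  cases hxj : x j
  · rw [sum_eq_single_of_mem j (by simp [hxj]) fun k _ hkj => if_neg (hothers k hkj),
      if_pos hj, select_eq_right_of_isFirstDiff hj hxj]
    exact sub_sum_Ioi_le_weightedZeros_sub hG hj hxj
  · rw [select_eq_left_of_isFirstDiff hj hxj, sub_self]
    refine (sum_eq_zero fun k hk => if_neg (hothers k ?_)).le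
    rintro rfl
    simp [hxj] at hk

lemma sum_flipProb_mul_ite_isFirstDiff (x : Fin n → Bool) (χ : ℝ) (G : Fin n → ℝ) (j : Fin n) :
    ∑ y, flipProb n χ x y *
        (if IsFirstDiff x y j then G j - ∑ k ∈ Ioi j, (if y k ≠ x k then G k else 0) else 0) =
      (1 - χ) ^ (j : ℕ) * χ * (G j - χ * ∑ k ∈ Ioi j, G k) := by
  have hdiff : ∀ k ∈ Ioi j, ∑ y with IsFirstDiff x y j,
      flipProb n χ x y * (if y k ≠ x k then G k else 0) = (1 - χ) ^ (j : ℕ) * χ * χ * G k := by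
    intro k hk
    rw [← sum_flipProb_isFirstDiff_and_ne x χ (mem_Ioi.mp hk), sum_mul, ← filter_filter,
      sum_filter (s := filter _ _)]
    simp_rw [mul_ite, mul_zero]
  simp_rw [mul_ite, mul_zero]
  rw [← sum_filter]
  simp_rw [mul_sub, sum_sub_distrib, mul_sum]
  rw [sum_comm, sum_congr rfl hdiff, ← sum_mul, sum_flipProb_isFirstDiff]
  simp_rw [mul_assoc]

theorem le_sum_flipProb_mul_weightedZeros_sub_select {χ β : ℝ} (hχ0 : 0 ≤ χ) (hχ1 : χ ≤ 1)
    {G : Fin n → ℝ} (hG : ∀ i, 0 ≤ G i) (hdom : ∀ j, χ * ∑ k ∈ Ioi j, G k ≤ β * G j)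
    (x : Fin n → Bool) :
    χ * (1 - β) * ∑ j with x j = false, (1 - χ) ^ (j : ℕ) * G j ≤
      ∑ y, flipProb n χ x y * (weightedZeros G x - weightedZeros G (select n x y)) := by
  calc χ * (1 - β) * ∑ j with x j = false, (1 - χ) ^ (j : ℕ) * G j
      ≤ ∑ j with x j = false, (1 - χ) ^ (j : ℕ) * χ * (G j - χ * ∑ k ∈ Ioi j, G k) := by
        rw [mul_sum]
        refine sum_le_sum fun j _ => ?_
        have hp : 0 ≤ (1 - χ) ^ (j : ℕ) * χ := mul_nonneg (pow_nonneg (by linarith) _) hχ0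
        nlinarith [mul_le_mul_of_nonneg_left (hdom j) hp]
    _ = ∑ y, ∑ j with x j = false, flipProb n χ x y *
          (if IsFirstDiff x y j then G j - ∑ k ∈ Ioi j, (if y k ≠ x k then G k else 0) else 0) := by
        rw [sum_comm]
        exact sum_congr rfl fun j _ => (sum_flipProb_mul_ite_isFirstDiff x χ G j).symm
    _ ≤ _ := sum_le_sum fun y _ => (mul_sum ..).symm.trans_le <| mul_le_mul_of_nonneg_left
          (sum_isFirstDiff_le_weightedZeros_sub_select hG x y) (flipProb_nonneg hχ0 hχ1 x y)

-- Positions are 0-based: `geomWeight c m i` is the weight `g_{i+1} = (1 + c)^(m - (i + 1))`.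
def geomWeight (c : ℝ) (m i : ℕ) : ℝ :=
  if i < m then (1 + c) ^ (m - (i + 1)) else 0

lemma geomWeight_nonneg {c : ℝ} (hc : 0 ≤ c) (m i : ℕ) : 0 ≤ geomWeight c m i := by
  unfold geomWeight
  split_ifs
  exacts [pow_nonneg (by linarith) _, le_rfl]

lemma mul_sum_Ioi_geomWeight_le {c : ℝ} (hc : 0 < c) (m : ℕ) (j : Fin n) :
    c * ∑ k ∈ Ioi j, geomWeight c m k ≤ geomWeight c m j := by
  by_cases hj : (j : ℕ) < m
  swap
  · have hzero : ∀ k ∈ Ioi j, geomWeight c m k = 0 := fun k hk =>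
      if_neg (by have := mem_Ioi.mp hk; omega)
    rw [sum_eq_zero hzero, mul_zero, geomWeight, if_neg hj]
  set s := (Ioi j).filter fun k : Fin n => (k : ℕ) < m
  have hinj : Set.InjOn (fun k : Fin n => m - (k + 1)) s := by
    intro a ha b hb hab
    simp only [s, coe_filter, Set.mem_ofPred_eq] at ha hb hab
    omega
  have hsub : s.image (fun k : Fin n => m - (k + 1)) ⊆
      range (m - (j + 1)) := by
    intro e he
    simp only [s, mem_image, mem_filter, mem_Ioi] at he
    obtain ⟨k, ⟨hjk, hk⟩, rfl⟩ := he
    simp only [mem_range]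
    omega
  calc c * ∑ k ∈ Ioi j, geomWeight c m k
      = c * ∑ e ∈ s.image (fun k : Fin n => m - (k + 1)), (1 + c) ^ e := by
        rw [sum_image hinj, sum_filter]
        rfl
    _ ≤ c * ∑ e ∈ range (m - (j + 1)), (1 + c) ^ e := mul_le_mul_of_nonneg_left
        (sum_le_sum_of_subset_of_nonneg hsub fun e _ _ => pow_nonneg (by linarith) e) hc.le
    _ = (1 + c) ^ (m - (j + 1)) - 1 := by rw [← geom_sum_mul, add_sub_cancel_left, mul_comm]
    _ ≤ geomWeight c m j := by rw [geomWeight, if_pos hj]; linarith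

lemma mul_sum_Ioi_geomWeight_le_inv_mul {c α χ : ℝ} (hα : 0 < α) (hχ : 0 < χ) (hαχ : α * χ ≤ c)
    (m : ℕ) (j : Fin n) :
    χ * ∑ k ∈ Ioi j, geomWeight c m k ≤ α⁻¹ * geomWeight c m j := by
  have hc : 0 < c := (mul_pos hα hχ).trans_le hαχ
  have hsum : 0 ≤ ∑ k ∈ Ioi j, geomWeight c m k :=
    sum_nonneg fun k _ => geomWeight_nonneg hc.le _ _
  rw [← div_eq_inv_mul, le_div_iff₀ hα]
  nlinarith [mul_sum_Ioi_geomWeight_le hc m j]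

lemma pow_mul_geomWeight_le {a c : ℝ} (ha0 : 0 ≤ a) (ha1 : a ≤ 1) (hc : 0 ≤ c) (m i : ℕ) :
    a ^ (m - 1) * geomWeight c m i ≤ a ^ i * geomWeight c m i := by
  by_cases hi : i < m
  · exact mul_le_mul_of_nonneg_right (pow_le_pow_of_le_one ha0 ha1 (by omega))
      (geomWeight_nonneg hc m i)
  · simp [geomWeight, hi]

lemma mul_le_mul_div_one_sub_pow {α χ κ : ℝ} (hα : 0 ≤ α) (hχ0 : 0 ≤ χ) (hχκ : χ ≤ κ) (hκ : κ < 1)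
    (N : ℕ) : α * χ ≤ α * κ / (1 - κ) ^ N :=
  calc α * χ ≤ α * κ := mul_le_mul_of_nonneg_left hχκ hα
    _ ≤ α * κ / (1 - κ) ^ N := le_div_self (mul_nonneg hα (hχ0.trans hχκ))
        (pow_pos (by linarith) N) (pow_le_one₀ (by linarith) (by linarith))

theorem one_step_drift_exponential_weights_general
    (n r : ℕ) (d : ℝ) (hd2 : d / 2 ^ r < 1)
    (α : ℝ) (hα : 2 < α)
    (χ : ℝ) (hχ0 : 0 < χ) (hχd : χ ≤ d * (1 / 2 ^ r))
    (g : (Fin n → Bool) → ℝ)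
    (hg : ∀ x, g x = ∑ i ∈ Finset.univ.filter (fun i : Fin n => (i : ℕ) < 2 ^ r),
      (1 + (α * d * (1 / 2 ^ r)) / (1 - d * (1 / 2 ^ r)) ^ (2 ^ r - 1)) ^
          (2 ^ r - ((i : ℕ) + 1)) *
        (if x i then 0 else 1))
    (x : Fin n → Bool) :
    χ * (1 - χ) ^ (2 ^ r - 1) * (1 - 1 / α) * g x ≤
      ∑ y : Fin n → Bool, flipProb n χ x y * (g x - g (select n x y)) := by
  set c := α * d * (1 / 2 ^ r) / (1 - d * (1 / 2 ^ r)) ^ (2 ^ r - 1)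
  set G : Fin n → ℝ := fun i => geomWeight c (2 ^ r) i
  have hα0 : 0 < α := by linarith
  have hκ1 : d * (1 / 2 ^ r) < 1 := by rwa [mul_one_div]
  have hχ1 : χ < 1 := hχd.trans_lt hκ1
  have hαχ : α * χ ≤ c := (mul_le_mul_div_one_sub_pow hα0.le hχ0.le hχd hκ1 (2 ^ r - 1)).trans_eq
    (by rw [← mul_assoc])
  have hc0 : 0 < c := (mul_pos hα0 hχ0).trans_le hαχ
  have hgG : ∀ z, g z = weightedZeros G z := fun z => by
    rw [hg, weightedZeros, sum_filter, sum_filter]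
    refine sum_congr rfl fun i _ => ?_
    by_cases hi : (i : ℕ) < 2 ^ r <;> cases z i <;> simp [G, geomWeight, hi]
  calc χ * (1 - χ) ^ (2 ^ r - 1) * (1 - 1 / α) * g x
      = χ * (1 - 1 / α) * ∑ j with x j = false, (1 - χ) ^ (2 ^ r - 1) * G j := by
        rw [hgG, weightedZeros, ← mul_sum]
        ring
    _ ≤ χ * (1 - 1 / α) * ∑ j with x j = false, (1 - χ) ^ (j : ℕ) * G j := by
        have hinv : 1 / α ≤ 1 := by rw [div_le_one hα0]; linarith
        exact mul_le_mul_of_nonneg_left (sum_le_sum fun j _ =>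
          pow_mul_geomWeight_le (by linarith) (by linarith) hc0.le _ _)
          (mul_nonneg hχ0.le (by linarith))
    _ ≤ _ := by
        simp_rw [hgG]
        exact le_sum_flipProb_mul_weightedZeros_sub_select hχ0.le hχ1.le
          (fun i => geomWeight_nonneg hc0.le _ _)
          (by simpa only [one_div] using mul_sum_Ioi_geomWeight_le_inv_mul hα0 hχ0 hαχ _) x

/-- One-step multiplicative drift of the exponentially weighted potential
`g x = ∑_{i=1}^{2^r} g_i (1 - x_i)` with
`g_i = (1 + α·d·χ_opt/(1 − d·χ_opt)^{2^r − 1})^{2^r − i}` and `χ_opt = 1/2^r`,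
for the (1+1) EA on BinVal with any mutation rate `0 < χ ≤ d·χ_opt`:
`E[g x − g x'] ≥ χ·(1 − χ)^{2^r − 1}·(1 − 1/α)·g x`, the expectation being over
the random mutation. -/
theorem one_step_drift_exponential_weights
    (n r : ℕ) (hrn : 2 ^ r ≤ n) (d : ℝ) (hd : 1 < d) (hd2 : d / 2 ^ r < 1)
    (α : ℝ) (hα : 2 < α)
    (χ : ℝ) (hχ0 : 0 < χ) (hχd : χ ≤ d * (1 / 2 ^ r))
    (g : (Fin n → Bool) → ℝ)
    (hg : ∀ x, g x = ∑ i ∈ Finset.univ.filter (fun i : Fin n => (i : ℕ) < 2 ^ r),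
      (1 + (α * d * (1 / 2 ^ r)) / (1 - d * (1 / 2 ^ r)) ^ (2 ^ r - 1)) ^
          (2 ^ r - ((i : ℕ) + 1)) *
        (if x i then 0 else 1))
    (x : Fin n → Bool) :
    χ * (1 - χ) ^ (2 ^ r - 1) * (1 - 1 / α) * g x ≤
      ∑ y : Fin n → Bool, flipProb n χ x y * (g x - g (select n x y)) :=
  one_step_drift_exponential_weights_general n r d hd2 α hα χ hχ0 hχd g hg x
end
end
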